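/- Let φ : ℝ → ℝ be a monotone decreasing nonnegative function such that for some constants C₀ > 0, δ > 0, s₀ ∈ ℝ, and for all s ≥ s₀ and all t > 0 we have t·φ(s+t) ≤ C₀·φ(s)^(1+δ). Then φ(s) = 0 for every s ≥ s₀ + 2C₀·φ(s₀)^δ/(1 - 2^(-δ)). -/

import Mathlib

/-!
If `φ s ≤ m`, the iteration inequality with `t = 2 C₀ m^δ` gives `t φ(s + t) ≤ C₀ m^{1+δ} = t m / 2`,
so a step of length `2 C₀ m^δ` halves the bound. Starting from `m = φ s₀` and halving repeatedly, the
`n`-th step has length `2 C₀ φ(s₀)^δ (2^{-δ})^n`; these form a geometric series summing to the stated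
threshold, beyond which `φ ≤ φ(s₀) / 2^n` for every `n`.
-/

open Finset

namespace DeGiorgi

variable {φ : ℝ → ℝ} {C₀ δ s₀ : ℝ}

theorem apply_add_le_half (hnonneg : ∀ s, 0 ≤ φ s) (hC₀ : 0 < C₀) (hδ : 0 ≤ 1 + δ)
    (hiter : ∀ s ≥ s₀, ∀ t > 0, t * φ (s + t) ≤ C₀ * (φ s) ^ (1 + δ))
    {s m : ℝ} (hs : s₀ ≤ s) (hm : 0 < m) (hφs : φ s ≤ m) :
    φ (s + 2 * C₀ * m ^ δ) ≤ m / 2 := by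
  set t := 2 * C₀ * m ^ δ
  have ht : 0 < t := by positivity
  refine le_of_mul_le_mul_left ?_ ht
  calc t * φ (s + t) ≤ C₀ * (φ s) ^ (1 + δ) := hiter s hs t ht
    _ ≤ C₀ * m ^ (1 + δ) := by gcongr; exact hnonneg s
    _ = t * (m / 2) := by rw [Real.rpow_add hm, Real.rpow_one]; ring

noncomputable def level (C₀ δ s₀ M : ℝ) (n : ℕ) : ℝ :=
  s₀ + 2 * C₀ * M ^ δ * ∑ k ∈ range n, (2 ^ (-δ) : ℝ) ^ k

theorem level_succ {M : ℝ} (hM : 0 ≤ M) (n : ℕ) :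
    level C₀ δ s₀ M (n + 1) = level C₀ δ s₀ M n + 2 * C₀ * (M / 2 ^ n) ^ δ := by
  have hpow : (M / 2 ^ n) ^ δ = M ^ δ * (2 ^ (-δ) : ℝ) ^ n := by
    rw [Real.div_rpow hM (by positivity), ← Real.rpow_natCast_mul zero_le_two, mul_comm,
      Real.rpow_mul_natCast zero_le_two, Real.rpow_neg zero_le_two, inv_pow, div_eq_mul_inv]
  rw [level, level, sum_range_succ, hpow]
  ring

theorem le_level (hC₀ : 0 ≤ C₀) {M : ℝ} (hM : 0 ≤ M) (n : ℕ) : s₀ ≤ level C₀ δ s₀ M n := by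
  have hsum : 0 ≤ ∑ k ∈ range n, (2 ^ (-δ) : ℝ) ^ k := sum_nonneg fun k _ => by positivity
  exact le_add_of_nonneg_right (mul_nonneg (by positivity) hsum)

theorem level_le (hC₀ : 0 ≤ C₀) (hδ : 0 < δ) {M : ℝ} (hM : 0 ≤ M) (n : ℕ) :
    level C₀ δ s₀ M n ≤ s₀ + 2 * C₀ * M ^ δ / (1 - 2 ^ (-δ)) := by
  have hr : (2 : ℝ) ^ (-δ) < 1 := Real.rpow_lt_one_of_one_lt_of_neg one_lt_two (neg_lt_zero.2 hδ)
  have hsum : ∑ k ∈ range n, (2 ^ (-δ) : ℝ) ^ k ≤ 1 / (1 - 2 ^ (-δ)) := by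
    have := geom_sum_Ico_le_of_lt_one (m := 0) (n := n) (by positivity) hr
    rwa [← range_eq_Ico, pow_zero] at this
  rw [level, ← mul_one_div (2 * C₀ * M ^ δ)]
  gcongr

theorem apply_level_le (hnonneg : ∀ s, 0 ≤ φ s) (hC₀ : 0 < C₀) (hδ : 0 ≤ 1 + δ)
    (hiter : ∀ s ≥ s₀, ∀ t > 0, t * φ (s + t) ≤ C₀ * (φ s) ^ (1 + δ))
    {M : ℝ} (hM : 0 < M) (hφs₀ : φ s₀ ≤ M) (n : ℕ) :
    φ (level C₀ δ s₀ M n) ≤ M / 2 ^ n := by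
  induction n with
  | zero => simpa [level] using hφs₀
  | succ n ih =>
    rw [level_succ hM.le, pow_succ, ← div_div]
    exact apply_add_le_half hnonneg hC₀ hδ hiter (le_level hC₀.le hM.le n)
      (by positivity) ih

end DeGiorgi

open DeGiorgi in
/-- De Giorgi's iteration lemma. -/
theorem deGiorgi_lemma (φ : ℝ → ℝ) (hmono : Antitone φ) (hnonneg : ∀ s, 0 ≤ φ s)
    (C₀ δ s₀ : ℝ) (hC₀ : 0 < C₀) (hδ : 0 < δ)
    (hiter : ∀ s ≥ s₀, ∀ t > 0, t * φ (s + t) ≤ C₀ * (φ s) ^ (1 + δ)) :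
    ∀ s ≥ s₀ + 2 * C₀ * (φ s₀) ^ δ / (1 - 2 ^ (-δ)), φ s = 0 := by
  intro s hs
  refine le_antisymm ?_ (hnonneg s)
  rcases (hnonneg s₀).eq_or_lt with hzero | hpos
  · rw [← hzero, Real.zero_rpow hδ.ne'] at hs
    exact (hmono (by simpa using hs)).trans hzero.ge
  · have hbound (n : ℕ) : φ s ≤ φ s₀ / 2 ^ n :=
      (hmono ((level_le hC₀.le hδ hpos.le n).trans hs)).trans
        (apply_level_le hnonneg hC₀ (by linarith) hiter hpos le_rfl n)
    exact ge_of_tendsto'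
      (tendsto_const_nhds.div_atTop (tendsto_pow_atTop_atTop_of_one_lt one_lt_two)) hbound
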